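/- Let A be a connected Γ-graded bialgebra with finite-dimensional homogeneous components, and let B denote its graded dual (also a connected Γ-graded bialgebra). Let ⟨·,·⟩ : A × B → k be the duality pairing. If a and b are ordered monomials in A and B respectively, then ⟨a, b⟩ = 0 unless Pol^∧(a) = Pol^∧(b). -/

import Mathlib

/-!
If `⟨a, b⟩ ≠ 0`, then `a` and `b` have the same degree, and `Pol(a)` and `Pol(b)` each lie below
the other, so the two wedges coincide. Write `a = g₁ ⋯ g_p` with factors of degrees `γᵢ` and
decreasing slopes; the partial sums `σⱼ = γ₁ + ⋯ + γⱼ` are the vertices of a concave staircase.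
Pairing the split `a = (g₁ ⋯ gⱼ)(gⱼ₊₁ ⋯ g_p)` against `Δ(b)` shows `σⱼ ∈ L(b)`. Conversely, every
`β ∈ L(a)` is a sum of left degrees `βᵢ ∈ L(gᵢ)`, and semistability of `gᵢ` bounds each tilted
height `v ↦ v₂ - c v₁` of `βᵢ` by `max 0` of that of `γᵢ`. Summing, `β` lies in the intersection
of the supporting half-planes of the staircase, which lies below its convex hull.
-/

open scoped TensorProduct
open TensorProduct

noncomputable section

namespace MVPaper

variable {k A : Type} [Field k] [Ring A] [Bialgebra k A]
variable {ι : Type} [AddCommMonoid ι] [DecidableEq ι]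
variable (𝒜 : ι → Submodule k A) [DirectSum.Decomposition 𝒜]

/-- The projection of `A` onto its degree-`γ` homogeneous component. -/
def proj (γ : ι) : A →ₗ[k] A :=
  (𝒜 γ).subtype ∘ₗ (DirectSum.component k ι (fun i => 𝒜 i) γ) ∘ₗ
    (DirectSum.decomposeLinearEquiv 𝒜).toLinearMap

/-- The projection of `A ⊗ A` onto its bidegree-`(β, γ)` homogeneous component. -/
def projT (β γ : ι) : A ⊗[k] A →ₗ[k] A ⊗[k] A :=
  TensorProduct.map (proj 𝒜 β) (proj 𝒜 γ)

/-- `L(a)`: the set of left degrees appearing in the coproduct of `a`. -/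
def Lset (a : A) : Set ι :=
  {β | ∃ γ, projT 𝒜 β γ (Coalgebra.comul (R := k) a) ≠ 0}

/-- `R(a)`: the set of right degrees appearing in the coproduct of `a`. -/
def Rset (a : A) : Set ι :=
  {γ | ∃ β, projT 𝒜 β γ (Coalgebra.comul (R := k) a) ≠ 0}

/-- The coproduct respects the grading. -/
def ComulGraded : Prop :=
  ∀ (γ : ι), ∀ a ∈ 𝒜 γ, ∀ β δ : ι, β + δ ≠ γ →
    projT 𝒜 β δ (Coalgebra.comul (R := k) a) = 0

/-- The coproduct of any element is the (finite) sum of its homogeneous components. -/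
def ComulDecomposes : Prop :=
  ∀ a : A, ∃ S : Finset (ι × ι),
    Coalgebra.comul (R := k) a = ∑ p ∈ S, projT 𝒜 p.1 p.2 (Coalgebra.comul (R := k) a)

/-- Connectedness: the degree-`0` component is spanned by the unit. -/
def GradedConnected : Prop := 𝒜 0 = Submodule.span k {(1 : A)}

end MVPaper

namespace MVPaper

variable {k A : Type} [Field k] [Ring A] [Bialgebra k A]
variable {Γ : AddSubmonoid (ℝ × ℝ)} [DecidableEq Γ]
variable (𝒜 : Γ → Submodule k A) [DirectSum.Decomposition 𝒜]

/-- `Γ` is contained in the right half-plane. -/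
def HalfPlane (Γ : AddSubmonoid (ℝ × ℝ)) : Prop :=
  ∀ γ ∈ Γ, 0 < γ.1 ∨ (γ.1 = 0 ∧ 0 ≤ γ.2)

/-- The slope `d/r` of a point `(r, d)` of the right half-plane, with `∞` for `r = 0`. -/
def slope (v : ℝ × ℝ) : WithTop ℝ :=
  if v.1 = 0 then ⊤ else (v.2 / v.1 : ℝ)

/-- Membership in `Γ_μ`. -/
def memSlope (μ : WithTop ℝ) (γ : Γ) : Prop :=
  (γ : ℝ × ℝ) = 0 ∨ slope (γ : ℝ × ℝ) = μ

/-- Membership in `Γ_{≤μ}`. -/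
def memSlopeLE (μ : WithTop ℝ) (γ : Γ) : Prop :=
  (γ : ℝ × ℝ) = 0 ∨ slope (γ : ℝ × ℝ) ≤ μ

/-- Membership in `Γ_{≥μ}`. -/
def memSlopeGE (μ : WithTop ℝ) (γ : Γ) : Prop :=
  (γ : ℝ × ℝ) = 0 ∨ μ ≤ slope (γ : ℝ × ℝ)

/-- `a` is a homogeneous semistable element of slope `μ` and degree `γ`. -/
def IsSemistableAt (μ : WithTop ℝ) (γ : Γ) (a : A) : Prop :=
  a ∈ 𝒜 γ ∧ memSlope μ γ ∧ ∀ β ∈ Lset 𝒜 a, memSlopeLE μ β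

/-- `a` is a homogeneous semistable element of slope `μ`. -/
def IsSemistable (μ : WithTop ℝ) (a : A) : Prop :=
  ∃ γ : Γ, IsSemistableAt 𝒜 μ γ a

/-- `A_μ`: the span of the homogeneous elements of slope `μ`. -/
def Aslope (μ : WithTop ℝ) : Submodule k A :=
  ⨆ γ ∈ {γ : Γ | memSlope μ γ}, 𝒜 γ

/-- `A_{[μ]}`: the span of the semistable elements of slope `μ`. -/
def Asemi (μ : WithTop ℝ) : Submodule k A :=
  Submodule.span k {a : A | IsSemistable 𝒜 μ a}

open Classical in
/-- The projection `p_μ : A → A_μ`. -/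
def pSlope (μ : WithTop ℝ) : A →ₗ[k] A :=
  (DirectSum.toModule k Γ A fun γ => if memSlope μ γ then (𝒜 γ).subtype else 0) ∘ₗ
    (DirectSum.decomposeLinearEquiv 𝒜).toLinearMap

/-- Ordered monomials whose factors have slopes in `J`: products of homogeneous
semistable elements of nonzero degree, with weakly decreasing slopes. -/
def IsOrderedMonomialIn (J : Set (WithTop ℝ)) (a : A) : Prop :=
  ∃ (p : ℕ) (g : Fin p → A) (γ : Fin p → Γ) (μ : Fin p → WithTop ℝ),
    (∀ i, IsSemistableAt 𝒜 (μ i) (γ i) (g i)) ∧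
    (∀ i, (γ i : ℝ × ℝ) ≠ 0) ∧ (∀ i, μ i ∈ J) ∧
    Antitone μ ∧ a = (List.ofFn g).prod

/-- Ordered monomials. -/
def IsOrderedMonomial (a : A) : Prop :=
  IsOrderedMonomialIn 𝒜 Set.univ a

/-- The points of `L(a)`, viewed in `ℝ²`. -/
def Lpts (a : A) : Set (ℝ × ℝ) :=
  (fun γ : Γ => (γ : ℝ × ℝ)) '' Lset 𝒜 a

/-- The polytope `Pol(a)`: the convex hull of `L(a)` in `ℝ²`. -/
def Pol (a : A) : Set (ℝ × ℝ) :=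
  convexHull ℝ (Lpts 𝒜 a)

/-- `Pol^∧(a)` for `a` of degree `γ`: the region between the upper rim of `Pol(a)`
and the straight segment from `0` to `γ`. -/
def PolWedge (a : A) (γ : Γ) : Set (ℝ × ℝ) :=
  {p | (∃ t ∈ Set.Icc (0 : ℝ) 1,
          p.1 = t * (γ : ℝ × ℝ).1 ∧ t * (γ : ℝ × ℝ).2 ≤ p.2) ∧
       (∃ q ∈ Pol 𝒜 a, q.1 = p.1 ∧ p.2 ≤ q.2)}

end MVPaper

namespace MVPaper

variable {k A B : Type} [Field k] [Ring A] [Bialgebra k A] [Ring B] [Bialgebra k B]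

/-- The pairing on tensor squares induced by a pairing `π : A × B → k`:
`pair2 π (a₁ ⊗ a₂) (b₁ ⊗ b₂) = π a₁ b₁ * π a₂ b₂`. -/
def pair2 (π : A →ₗ[k] Module.Dual k B) :
    (A ⊗[k] A) →ₗ[k] Module.Dual k (B ⊗[k] B) :=
  TensorProduct.dualDistrib k B B ∘ₗ TensorProduct.map π π

/-- `π` is a duality of graded bialgebras: it is graded, perfect componentwise, and
intertwines multiplication with comultiplication on both sides. -/
def IsGradedBialgebraPairing {Γ : AddSubmonoid (ℝ × ℝ)} [DecidableEq Γ]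
    (𝒜 : Γ → Submodule k A) [DirectSum.Decomposition 𝒜]
    (ℬ : Γ → Submodule k B) [DirectSum.Decomposition ℬ]
    (π : A →ₗ[k] Module.Dual k B) : Prop :=
  (∀ γ δ : Γ, γ ≠ δ → ∀ a ∈ 𝒜 γ, ∀ b ∈ ℬ δ, π a b = 0) ∧
  (∀ γ : Γ, ∀ a ∈ 𝒜 γ, (∀ b ∈ ℬ γ, π a b = 0) → a = 0) ∧
  (∀ γ : Γ, ∀ b ∈ ℬ γ, (∀ a ∈ 𝒜 γ, π a b = 0) → b = 0) ∧
  (∀ (a₁ a₂ : A) (b : B),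
    π (a₁ * a₂) b = pair2 π (a₁ ⊗ₜ[k] a₂) (Coalgebra.comul (R := k) b)) ∧
  (∀ (a : A) (b₁ b₂ : B),
    π a (b₁ * b₂) = pair2 π (Coalgebra.comul (R := k) a) (b₁ ⊗ₜ[k] b₂)) ∧
  (π 1 1 = 1)

end MVPaper

namespace MVPaper

section TensorComponents

variable {k A ι : Type} [Field k] [Ring A] [Algebra k A] (𝒜 : ι → Submodule k A)

def tensorComponent (β γ : ι) : Submodule k (A ⊗[k] A) :=
  Submodule.span k (Set.image2 (· ⊗ₜ[k] ·) (𝒜 β) (𝒜 γ))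

lemma mul_mem_tensorComponent [AddMonoid ι] [SetLike.GradedMonoid 𝒜] {β₁ γ₁ β₂ γ₂ : ι}
    {u v : A ⊗[k] A} (hu : u ∈ tensorComponent 𝒜 β₁ γ₁) (hv : v ∈ tensorComponent 𝒜 β₂ γ₂) :
    u * v ∈ tensorComponent 𝒜 (β₁ + β₂) (γ₁ + γ₂) := by
  have huv := Submodule.mul_mem_mul hu hv
  rw [tensorComponent, tensorComponent, Submodule.span_mul_span] at huv
  refine Submodule.span_mono ?_ huv
  rintro _ ⟨_, ⟨x₁, hx₁, y₁, hy₁, rfl⟩, _, ⟨x₂, hx₂, y₂, hy₂, rfl⟩, rfl⟩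
  exact ⟨_, SetLike.mul_mem_graded hx₁ hx₂, _, SetLike.mul_mem_graded hy₁ hy₂,
    (Algebra.TensorProduct.tmul_mul_tmul _ _ _ _).symm⟩

lemma one_mem_tensorComponent [Zero ι] [SetLike.GradedOne 𝒜] :
    (1 : A ⊗[k] A) ∈ tensorComponent 𝒜 0 0 :=
  Submodule.subset_span ⟨1, SetLike.one_mem_graded 𝒜, 1, SetLike.one_mem_graded 𝒜, rfl⟩

end TensorComponents

section Projections

variable {k A ι : Type} [Field k] [Ring A] [Bialgebra k A] [DecidableEq ι]
variable (𝒜 : ι → Submodule k A) [DirectSum.Decomposition 𝒜]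

lemma proj_mem (γ : ι) (x : A) : proj 𝒜 γ x ∈ 𝒜 γ :=
  (DirectSum.decompose 𝒜 x γ).2

lemma proj_eq_zero_of_mem {γ δ : ι} {x : A} (hx : x ∈ 𝒜 δ) (h : δ ≠ γ) : proj 𝒜 γ x = 0 := by
  simp only [proj, LinearMap.comp_apply, Submodule.coe_subtype]
  exact DirectSum.decompose_of_mem_ne 𝒜 hx h

lemma projT_mem_tensorComponent (β γ : ι) (z : A ⊗[k] A) :
    projT 𝒜 β γ z ∈ tensorComponent 𝒜 β γ := by
  induction z with
  | zero => simp
  | tmul x y => exact Submodule.subset_span ⟨_, proj_mem 𝒜 β x, _, proj_mem 𝒜 γ y, rfl⟩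
  | add u v hu hv => rw [map_add]; exact add_mem hu hv

lemma projT_eq_zero_of_mem_tensorComponent {β γ β' γ' : ι} {z : A ⊗[k] A}
    (hz : z ∈ tensorComponent 𝒜 β' γ') (h : (β, γ) ≠ (β', γ')) : projT 𝒜 β γ z = 0 := by
  induction hz using Submodule.span_induction with
  | mem z hz =>
    obtain ⟨x, hx, y, hy, rfl⟩ := hz
    by_cases hβ : β' = β
    · have hγ : γ' ≠ γ := fun hγ => h (by rw [hβ, hγ])
      simp [projT, proj_eq_zero_of_mem 𝒜 hy hγ]
    · simp [projT, proj_eq_zero_of_mem 𝒜 hx hβ]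
  | zero => simp
  | add u v _ _ hu hv => rw [map_add, hu, hv, add_zero]
  | smul c u _ hu => rw [map_smul, hu, smul_zero]

end Projections

section LeftDegrees

variable {k A ι : Type} [Field k] [Ring A] [Bialgebra k A] [AddCommMonoid ι] [DecidableEq ι]
variable {𝒜 : ι → Submodule k A} [DirectSum.Decomposition 𝒜]

lemma exists_add_eq_of_mem_Lset (hgr : ComulGraded 𝒜) {g : A} {γ β : ι} (hg : g ∈ 𝒜 γ)
    (hβ : β ∈ Lset 𝒜 g) : ∃ δ, β + δ = γ := by
  obtain ⟨δ, hδ⟩ := hβ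
  exact ⟨δ, by_contra fun h => hδ (hgr γ g hg β δ h)⟩

variable [SetLike.GradedMonoid 𝒜]

lemma Lset_one {β : ι} (hβ : β ∈ Lset 𝒜 (1 : A)) : β = 0 := by
  obtain ⟨δ, hδ⟩ := hβ
  rw [Bialgebra.comul_one] at hδ
  by_contra h
  exact hδ (projT_eq_zero_of_mem_tensorComponent 𝒜 (one_mem_tensorComponent 𝒜) (by simp [h]))

lemma exists_add_of_mem_Lset_mul (hdec : ComulDecomposes 𝒜) {x y : A} {β : ι}
    (hβ : β ∈ Lset 𝒜 (x * y)) : ∃ β₁ ∈ Lset 𝒜 x, ∃ β₂ ∈ Lset 𝒜 y, β = β₁ + β₂ := by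
  obtain ⟨δ, hδ⟩ := hβ
  obtain ⟨S, hS⟩ := hdec x
  obtain ⟨T, hT⟩ := hdec y
  rw [Bialgebra.comul_mul, hS, hT, Finset.sum_mul_sum, map_sum] at hδ
  obtain ⟨s, -, hδ⟩ := Finset.exists_ne_zero_of_sum_ne_zero hδ
  rw [map_sum] at hδ
  obtain ⟨t, -, hst⟩ := Finset.exists_ne_zero_of_sum_ne_zero hδ
  have hmul : projT 𝒜 s.1 s.2 (Coalgebra.comul (R := k) x) *
      projT 𝒜 t.1 t.2 (Coalgebra.comul (R := k) y) ≠ 0 :=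
    fun h => hst (by rw [h, map_zero])
  have hdeg : (β, δ) = (s.1 + t.1, s.2 + t.2) := by
    by_contra h
    exact hst (projT_eq_zero_of_mem_tensorComponent 𝒜 (mul_mem_tensorComponent 𝒜
      (projT_mem_tensorComponent 𝒜 _ _ _) (projT_mem_tensorComponent 𝒜 _ _ _)) h)
  exact ⟨s.1, ⟨s.2, left_ne_zero_of_mul hmul⟩, t.1, ⟨t.2, right_ne_zero_of_mul hmul⟩,
    (Prod.ext_iff.1 hdeg).1⟩

lemma exists_sum_of_mem_Lset_prod_ofFn (hdec : ComulDecomposes 𝒜) :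
    ∀ {p : ℕ} (g : Fin p → A) {β : ι}, β ∈ Lset 𝒜 (List.ofFn g).prod →
      ∃ B : Fin p → ι, β = ∑ i, B i ∧ ∀ i, B i ∈ Lset 𝒜 (g i)
  | 0, g, β, hβ => ⟨Fin.elim0, by simpa using Lset_one hβ, fun i => i.elim0⟩
  | p + 1, g, β, hβ => by
    rw [List.ofFn_succ, List.prod_cons] at hβ
    obtain ⟨β₁, h₁, β₂, h₂, rfl⟩ := exists_add_of_mem_Lset_mul hdec hβ
    obtain ⟨B, rfl, hB⟩ := exists_sum_of_mem_Lset_prod_ofFn hdec (fun i => g i.succ) h₂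
    exact ⟨Fin.cons β₁ B, by simp [Fin.sum_univ_succ], Fin.cases h₁ hB⟩

end LeftDegrees

section Pairing

variable {k A B ι : Type} [Field k] [Ring A] [Bialgebra k A] [Ring B] [Bialgebra k B]

@[simp]
lemma pair2_tmul (π : A →ₗ[k] Module.Dual k B) (x y : A) (u v : B) :
    pair2 π (x ⊗ₜ[k] y) (u ⊗ₜ[k] v) = π x u * π y v := by
  simp [pair2, TensorProduct.dualDistrib_apply]

lemma pair2_flip (π : A →ₗ[k] Module.Dual k B) (z : A ⊗[k] A) (w : B ⊗[k] B) :
    pair2 π.flip w z = pair2 π z w := by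
  induction z with
  | zero => simp
  | add z₁ z₂ h₁ h₂ => simp [h₁, h₂]
  | tmul x y =>
    induction w with
    | zero => simp
    | add w₁ w₂ h₁ h₂ => simp [h₁, h₂]
    | tmul u v => simp

lemma IsGradedBialgebraPairing.flip {Γ : AddSubmonoid (ℝ × ℝ)} [DecidableEq Γ]
    {𝒜 : Γ → Submodule k A} [DirectSum.Decomposition 𝒜]
    {ℬ : Γ → Submodule k B} [DirectSum.Decomposition ℬ] {π : A →ₗ[k] Module.Dual k B}
    (hπ : IsGradedBialgebraPairing 𝒜 ℬ π) : IsGradedBialgebraPairing ℬ 𝒜 π.flip := by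
  obtain ⟨hgr, hnondegA, hnondegB, hmulA, hmulB, hone⟩ := hπ
  exact ⟨fun γ δ h b hb a ha => hgr δ γ (Ne.symm h) a ha b hb, hnondegB, hnondegA,
    fun b₁ b₂ a => (hmulB a b₁ b₂).trans (pair2_flip π _ _).symm,
    fun b a₁ a₂ => (hmulA a₁ a₂ b).trans (pair2_flip π _ _).symm, hone⟩

variable {𝒜 : ι → Submodule k A} {ℬ : ι → Submodule k B}

lemma pair2_tmul_eq_zero_of_mem_tensorComponent {π : A →ₗ[k] Module.Dual k B}
    (hgr : ∀ γ δ : ι, γ ≠ δ → ∀ a ∈ 𝒜 γ, ∀ b ∈ ℬ δ, π a b = 0)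
    {τ β δ : ι} (hτ : τ ≠ β) {x : A} (hx : x ∈ 𝒜 τ) (y : A) {w : B ⊗[k] B}
    (hw : w ∈ tensorComponent ℬ β δ) : pair2 π (x ⊗ₜ[k] y) w = 0 := by
  induction hw using Submodule.span_induction with
  | mem w hw =>
    obtain ⟨u, hu, v, hv, rfl⟩ := hw
    rw [pair2_tmul, hgr τ β hτ x hx u hu, zero_mul]
  | zero => simp
  | add w₁ w₂ _ _ h₁ h₂ => rw [map_add, h₁, h₂, add_zero]
  | smul c w _ h => rw [map_smul, h, smul_zero]

variable [DecidableEq ι] [DirectSum.Decomposition ℬ]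

lemma mem_Lset_of_pairing_mul_ne_zero {π : A →ₗ[k] Module.Dual k B}
    (hgr : ∀ γ δ : ι, γ ≠ δ → ∀ a ∈ 𝒜 γ, ∀ b ∈ ℬ δ, π a b = 0)
    (hmul : ∀ (a₁ a₂ : A) (b : B),
      π (a₁ * a₂) b = pair2 π (a₁ ⊗ₜ[k] a₂) (Coalgebra.comul (R := k) b))
    (hdec : ComulDecomposes ℬ) {x y : A} {b : B} {τ : ι} (hx : x ∈ 𝒜 τ)
    (hne : π (x * y) b ≠ 0) : τ ∈ Lset ℬ b := by
  by_contra hτ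
  obtain ⟨T, hT⟩ := hdec b
  refine hne ?_
  rw [hmul, hT, map_sum]
  refine Finset.sum_eq_zero fun t _ => ?_
  by_cases h : τ = t.1
  · have ht : projT ℬ t.1 t.2 (Coalgebra.comul (R := k) b) = 0 := by
      by_contra h0
      exact hτ ⟨t.2, h ▸ h0⟩
    rw [ht, map_zero]
  · exact pair2_tmul_eq_zero_of_mem_tensorComponent hgr h hx y (projT_mem_tensorComponent ℬ _ _ _)

end Pairing

section Staircase

/-- `v 0 + ⋯ + v (j - 1)`, which is the whole sum once `j ≥ p`. -/
def partialSum {M : Type} [AddCommMonoid M] {p : ℕ} (v : Fin p → M) (j : ℕ) : M :=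
  ∑ i with i.val < j, v i

lemma partialSum_succ {M : Type} [AddCommMonoid M] {p : ℕ} (v : Fin p → M) {j : ℕ}
    (hj : j < p) : partialSum v (j + 1) = partialSum v j + v ⟨j, hj⟩ := by
  simp only [partialSum, ← List.sum_take_ofFn]
  rw [List.sum_take_succ _ _ (by simpa)]
  simp

lemma partialSum_self {M : Type} [AddCommMonoid M] {p : ℕ} (v : Fin p → M) :
    partialSum v p = ∑ i, v i := by
  simp [partialSum]

lemma SetLike.prod_take_ofFn_mem_graded {R S ι : Type} [Monoid R] [SetLike S R]
    [AddCommMonoid ι] {𝒜 : ι → S} [SetLike.GradedMonoid 𝒜] {p : ℕ} {g : Fin p → R}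
    {γ : Fin p → ι} (hg : ∀ i, g i ∈ 𝒜 (γ i)) (j : ℕ) :
    ((List.ofFn g).take j).prod ∈ 𝒜 (partialSum γ j) := by
  rw [partialSum, ← List.sum_take_ofFn, List.ofFn_eq_map, List.ofFn_eq_map, ← List.map_take,
    ← List.map_take]
  exact SetLike.list_prod_map_mem_graded _ _ _ fun i _ => hg i

def rightHalfPlane : Set (ℝ × ℝ) := {v | 0 < v.1 ∨ v.1 = 0 ∧ 0 ≤ v.2}

lemma HalfPlane.coe_mem {Γ : AddSubmonoid (ℝ × ℝ)} (hHP : HalfPlane Γ) (γ : Γ) :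
    (γ : ℝ × ℝ) ∈ rightHalfPlane :=
  hHP γ γ.2

lemma fst_nonneg_of_mem_rightHalfPlane {v : ℝ × ℝ} (hv : v ∈ rightHalfPlane) : 0 ≤ v.1 :=
  hv.elim le_of_lt fun h => h.1.ge

lemma slope_of_fst_ne_zero {v : ℝ × ℝ} (hv : v.1 ≠ 0) : slope v = ↑(v.2 / v.1) :=
  if_neg hv

/-- The height of `v` above the line of slope `c` through the origin. -/
def tiltedHeight (c : ℝ) : ℝ × ℝ →ₗ[ℝ] ℝ :=
  LinearMap.snd ℝ ℝ ℝ - c • LinearMap.fst ℝ ℝ ℝ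

@[simp]
lemma tiltedHeight_apply (c : ℝ) (v : ℝ × ℝ) : tiltedHeight c v = v.2 - c * v.1 := rfl

lemma snd_le_snd_of_tiltedHeight_le {c : ℝ} {v w : ℝ × ℝ} (h₁ : v.1 = w.1)
    (h : tiltedHeight c v ≤ tiltedHeight c w) : v.2 ≤ w.2 := by
  simp only [tiltedHeight_apply, h₁] at h
  linarith

lemma tiltedHeight_nonneg_of_le_slope {c : ℝ} {v : ℝ × ℝ} (hv : v ∈ rightHalfPlane)
    (h : (c : WithTop ℝ) ≤ slope v) : 0 ≤ tiltedHeight c v := by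
  rcases hv with hv₁ | ⟨hv₁, hv₂⟩
  · rw [slope_of_fst_ne_zero hv₁.ne', WithTop.coe_le_coe, le_div_iff₀ hv₁] at h
    simp only [tiltedHeight_apply]
    linarith
  · simpa [hv₁] using hv₂

lemma tiltedHeight_nonpos_of_slope_le {c : ℝ} {v : ℝ × ℝ} (hv : v ∈ rightHalfPlane)
    (h : slope v ≤ c) : tiltedHeight c v ≤ 0 := by
  rcases hv with hv₁ | ⟨hv₁, -⟩
  · rw [slope_of_fst_ne_zero hv₁.ne', WithTop.coe_le_coe, div_le_iff₀ hv₁] at h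
    simp only [tiltedHeight_apply]
    linarith
  · simp [slope, hv₁] at h

lemma tiltedHeight_le_max_zero_add {β δ : ℝ × ℝ} (hβ : β ∈ rightHalfPlane)
    (hδ : δ ∈ rightHalfPlane) (hs : β = 0 ∨ slope β ≤ slope (β + δ)) (c : ℝ) :
    tiltedHeight c β ≤ max 0 (tiltedHeight c (β + δ)) := by
  rcases hs with rfl | hs
  · simp
  suffices tiltedHeight c β ≤ 0 ∨ 0 ≤ tiltedHeight c δ by
    rw [map_add]
    exact this.elim (le_max_of_le_left ·) fun h => le_max_of_le_right (by linarith)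
  rcases hδ with hδ₁ | ⟨hδ₁, hδ₂⟩
  · rcases hβ with hβ₁ | ⟨hβ₁, -⟩
    · have hsum₁ : (β + δ).1 ≠ 0 := by simp only [Prod.fst_add]; linarith
      rw [slope_of_fst_ne_zero hβ₁.ne', slope_of_fst_ne_zero hsum₁, WithTop.coe_le_coe,
        Prod.fst_add, Prod.snd_add, div_le_div_iff₀ hβ₁ (by linarith)] at hs
      simp only [tiltedHeight_apply]
      -- `hs` says that `δ` is at least as steep as `β`
      by_contra! h
      nlinarith
    · rw [slope, if_pos hβ₁, slope_of_fst_ne_zero (by simp [hβ₁, hδ₁.ne'])] at hs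
      exact absurd hs (by simp)
  · exact Or.inr (by simpa [hδ₁] using hδ₂)

variable {p : ℕ} (v : Fin p → ℝ × ℝ)

/-- The largest tilted height of the vertices `partialSum v j` when the slopes of `v` decrease
(`stairSupport_eq_tiltedHeight_partialSum`). -/
def stairSupport (c : ℝ) : ℝ := ∑ i, max 0 (tiltedHeight c (v i))

def stairRegion : Set (ℝ × ℝ) :=
  {q | 0 ≤ q.1 ∧ q.1 ≤ (∑ i, v i).1 ∧ ∀ c, tiltedHeight c q ≤ stairSupport v c}

lemma convex_stairRegion : Convex ℝ (stairRegion v) := by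
  have hfst := (LinearMap.fst ℝ ℝ ℝ).isLinear
  have htilted : Convex ℝ {q : ℝ × ℝ | ∀ c, tiltedHeight c q ≤ stairSupport v c} := by
    rw [Set.ofPred_forall]
    exact convex_iInter fun c => convex_halfSpace_le (tiltedHeight c).isLinear _
  exact (convex_halfSpace_ge hfst 0).inter ((convex_halfSpace_le hfst _).inter htilted)

lemma stairSupport_eq_tiltedHeight_partialSum (hv : ∀ i, v i ∈ rightHalfPlane) {c : ℝ}
    {j : ℕ} (hlt : ∀ i : Fin p, i.val < j → (c : WithTop ℝ) ≤ slope (v i))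
    (hge : ∀ i : Fin p, j ≤ i.val → slope (v i) ≤ c) :
    stairSupport v c = tiltedHeight c (partialSum v j) := by
  rw [stairSupport, partialSum, map_sum, Finset.sum_filter]
  refine Finset.sum_congr rfl fun i _ => ?_
  split_ifs with h
  · exact max_eq_right (tiltedHeight_nonneg_of_le_slope (hv i) (hlt i h))
  · exact max_eq_left (tiltedHeight_nonpos_of_slope_le (hv i) (hge i (not_lt.1 h)))

def LiesBelow (S T : Set (ℝ × ℝ)) : Prop :=
  ∀ v ∈ S, ∃ w ∈ T, w.1 = v.1 ∧ v.2 ≤ w.2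

lemma LiesBelow.mono {S S' T T' : Set (ℝ × ℝ)} (h : LiesBelow S T) (hS : S' ⊆ S) (hT : T ⊆ T') :
    LiesBelow S' T' :=
  fun v hv => (h v (hS hv)).imp fun _ ⟨hw, hw'⟩ => ⟨hT hw, hw'⟩

lemma exists_le_and_lt_succ {α : Type} [LinearOrder α] (f : ℕ → α) {x : α} (h₀ : f 0 ≤ x) (p : ℕ) :
    ∃ j ≤ p, f j ≤ x ∧ (j < p → x < f (j + 1)) := by
  classical
  exact ⟨Nat.findGreatest (f · ≤ x) p, Nat.findGreatest_le p,
    Nat.findGreatest_spec (P := (f · ≤ x)) (Nat.zero_le p) h₀,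
    fun h => lt_of_not_ge (Nat.findGreatest_is_greatest (Nat.lt_succ_self _) h)⟩

lemma exists_forall_coe_le_slope : ∃ c : ℝ, ∀ i, (c : WithTop ℝ) ≤ slope (v i) := by
  obtain ⟨c, hc⟩ := (Set.finite_range fun i => (slope (v i)).untopD 0).bddBelow
  refine ⟨c, fun i => ?_⟩
  have hci := hc ⟨i, rfl⟩
  cases h : slope (v i) <;> simp_all

/-- The region cut out by the tilted heights lies below the polygon through the vertices
`partialSum v j`: over `[partialSum v j, partialSum v (j + 1)]`, test with the slope of `v j`,
for which the vertex `partialSum v j` realises `stairSupport`. -/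
lemma stairRegion_liesBelow_convexHull (hv : ∀ i, v i ∈ rightHalfPlane)
    (hanti : Antitone (slope ∘ v)) :
    LiesBelow (stairRegion v) (convexHull ℝ (Set.range (partialSum v))) := by
  rintro q ⟨hq₀, hqp, hq⟩
  obtain ⟨j, hjp, hj, hj'⟩ :=
    exists_le_and_lt_succ (fun j => (partialSum v j).1) (by simpa [partialSum] using hq₀) p
  rcases hjp.lt_or_eq with hjp | rfl
  · set i : Fin p := ⟨j, hjp⟩
    have hstep := partialSum_succ v hjp
    have hvi : 0 < (v i).1 := by
      have := hj' hjp
      rw [hstep, Prod.fst_add] at this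
      linarith
    set c := (v i).2 / (v i).1
    have hslope : slope (v i) = c := slope_of_fst_ne_zero hvi.ne'
    have hS : stairSupport v c = tiltedHeight c (partialSum v j) :=
      stairSupport_eq_tiltedHeight_partialSum v hv
        (fun i' hi' => hslope ▸ hanti (Fin.le_iff_val_le_val.2 hi'.le))
        (fun i' hi' => hslope ▸ hanti (Fin.le_iff_val_le_val.2 hi'))
    have hvi_height : tiltedHeight c (v i) = 0 := by
      simp only [tiltedHeight_apply, c]
      field_simp
      ring
    set t := (q.1 - (partialSum v j).1) / (v i).1
    have ht : t ∈ Set.Icc (0 : ℝ) 1 := by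
      have := hj' hjp
      rw [hstep, Prod.fst_add] at this
      constructor
      · exact div_nonneg (by linarith) hvi.le
      · rw [div_le_one hvi]; linarith
    have hmem := (convex_convexHull ℝ (Set.range (partialSum v))).add_smul_sub_mem
      (subset_convexHull ℝ _ (Set.mem_range_self j))
      (subset_convexHull ℝ _ (Set.mem_range_self (j + 1))) ht
    rw [hstep, add_sub_cancel_left] at hmem
    have hfst : (partialSum v j + t • v i).1 = q.1 := by
      simp only [Prod.fst_add, Prod.smul_fst, smul_eq_mul, t]
      field_simp
      ring
    refine ⟨_, hmem, hfst, snd_le_snd_of_tiltedHeight_le (c := c) hfst.symm ?_⟩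
    rw [map_add, map_smul, hvi_height, smul_zero, add_zero, ← hS]
    exact hq c
  · obtain ⟨c, hc⟩ := exists_forall_coe_le_slope v
    have hS : stairSupport v c = tiltedHeight c (partialSum v j) :=
      stairSupport_eq_tiltedHeight_partialSum v hv (fun i _ => hc i)
        (fun i hi => absurd i.2 hi.not_gt)
    have hfst : (partialSum v j).1 = q.1 := le_antisymm hj (partialSum_self v ▸ hqp)
    exact ⟨_, subset_convexHull ℝ _ (Set.mem_range_self j), hfst,
      snd_le_snd_of_tiltedHeight_le hfst.symm (hS ▸ hq c)⟩

lemma sum_mem_stairRegion {u : Fin p → ℝ × ℝ}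
    (hu : ∀ i, u i ∈ stairRegion (fun _ : Fin 1 => v i)) : ∑ i, u i ∈ stairRegion v := by
  simp only [stairRegion, stairSupport, Finset.univ_unique, Finset.sum_singleton,
    Set.mem_ofPred_eq] at hu
  refine ⟨?_, ?_, fun c => ?_⟩
  · rw [Prod.fst_sum]
    exact Finset.sum_nonneg fun i _ => (hu i).1
  · rw [Prod.fst_sum, Prod.fst_sum]
    exact Finset.sum_le_sum fun i _ => (hu i).2.1
  · rw [map_sum]
    exact Finset.sum_le_sum fun i _ => (hu i).2.2 c

end Staircase

section OrderedMonomials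

variable {k A B : Type} [Field k] [Ring A] [Bialgebra k A] [Ring B] [Bialgebra k B]
variable {Γ : AddSubmonoid (ℝ × ℝ)} [DecidableEq Γ]
variable {𝒜 : Γ → Submodule k A} [DirectSum.Decomposition 𝒜]

lemma coe_mem_stairRegion_of_mem_Lset (hHP : HalfPlane Γ) (hgr : ComulGraded 𝒜)
    {μ : WithTop ℝ} {γ β : Γ} {g : A} (hg : IsSemistableAt 𝒜 μ γ g) (hγ : (γ : ℝ × ℝ) ≠ 0)
    (hβ : β ∈ Lset 𝒜 g) : (β : ℝ × ℝ) ∈ stairRegion (fun _ : Fin 1 => (γ : ℝ × ℝ)) := by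
  obtain ⟨δ, rfl⟩ := exists_add_eq_of_mem_Lset hgr hg.1 hβ
  have hslope : (β : ℝ × ℝ) = 0 ∨ slope (β : ℝ × ℝ) ≤ slope ((β : ℝ × ℝ) + δ) := by
    rw [← AddSubmonoid.coe_add, hg.2.1.resolve_left hγ]
    exact hg.2.2 β hβ
  simp only [stairRegion, stairSupport, Finset.univ_unique, Finset.sum_singleton,
    AddSubmonoid.coe_add, Prod.fst_add, Set.mem_ofPred_eq]
  exact ⟨fst_nonneg_of_mem_rightHalfPlane (hHP.coe_mem β),
    le_add_of_nonneg_right (fst_nonneg_of_mem_rightHalfPlane (hHP.coe_mem δ)),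
    tiltedHeight_le_max_zero_add (hHP.coe_mem β) (hHP.coe_mem δ) hslope⟩

lemma coe_mem_stairRegion_of_mem_Lset_prod (hHP : HalfPlane Γ) (hgr : ComulGraded 𝒜)
    (hdec : ComulDecomposes 𝒜) [SetLike.GradedMonoid 𝒜] {p : ℕ} {g : Fin p → A}
    {γ : Fin p → Γ} {μ : Fin p → WithTop ℝ} (hg : ∀ i, IsSemistableAt 𝒜 (μ i) (γ i) (g i))
    (hγ : ∀ i, (γ i : ℝ × ℝ) ≠ 0) {β : Γ} (hβ : β ∈ Lset 𝒜 (List.ofFn g).prod) :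
    (β : ℝ × ℝ) ∈ stairRegion (fun i => (γ i : ℝ × ℝ)) := by
  obtain ⟨β', rfl, hβ'⟩ := exists_sum_of_mem_Lset_prod_ofFn hdec g hβ
  rw [AddSubmonoid.coe_finsetSum]
  exact sum_mem_stairRegion _ fun i => coe_mem_stairRegion_of_mem_Lset hHP hgr (hg i) (hγ i) (hβ' i)

variable {ℬ : Γ → Submodule k B} [DirectSum.Decomposition ℬ]

theorem liesBelow_Pol_of_pairing_ne_zero (hHP : HalfPlane Γ) (hgr : ComulGraded 𝒜)
    (hdecA : ComulDecomposes 𝒜) (hdecB : ComulDecomposes ℬ) [SetLike.GradedMonoid 𝒜]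
    {π : A →ₗ[k] Module.Dual k B} (hπ : IsGradedBialgebraPairing 𝒜 ℬ π) {a : A} {b : B}
    (ha : IsOrderedMonomial 𝒜 a) (hab : π a b ≠ 0) : LiesBelow (Pol 𝒜 a) (Pol ℬ b) := by
  obtain ⟨p, g, γ, μ, hg, hγ, -, hμ, rfl⟩ := ha
  set v : Fin p → ℝ × ℝ := fun i => (γ i : ℝ × ℝ)
  have hanti : Antitone (slope ∘ v) := fun i j hij => by
    simpa only [Function.comp_apply, v, (hg i).2.1.resolve_left (hγ i),
      (hg j).2.1.resolve_left (hγ j)] using hμ hij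
  have hvertex (j : ℕ) : partialSum v j ∈ Lpts ℬ b := by
    refine ⟨partialSum γ j, mem_Lset_of_pairing_mul_ne_zero hπ.1 hπ.2.2.2.1 hdecB
      (y := ((List.ofFn g).drop j).prod)
      (SetLike.prod_take_ofFn_mem_graded (fun i => (hg i).1) j) ?_, ?_⟩
    · rwa [List.prod_take_mul_prod_drop]
    · simp [partialSum, v]
  refine (stairRegion_liesBelow_convexHull v (fun i => hHP.coe_mem (γ i)) hanti).mono ?_
    (convexHull_mono (Set.range_subset_iff.2 hvertex))
  refine convexHull_min ?_ (convex_stairRegion v)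
  rintro _ ⟨β, hβ, rfl⟩
  exact coe_mem_stairRegion_of_mem_Lset_prod hHP hgr hdecA hg hγ hβ

end OrderedMonomials

lemma PolWedge_subset_of_liesBelow {k A B : Type} [Field k] [Ring A] [Bialgebra k A] [Ring B]
    [Bialgebra k B] {Γ : AddSubmonoid (ℝ × ℝ)} [DecidableEq Γ] {𝒜 : Γ → Submodule k A}
    [DirectSum.Decomposition 𝒜] {ℬ : Γ → Submodule k B} [DirectSum.Decomposition ℬ]
    {a : A} {b : B} (h : LiesBelow (Pol 𝒜 a) (Pol ℬ b)) (γ : Γ) :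
    PolWedge 𝒜 a γ ⊆ PolWedge ℬ b γ := by
  rintro q ⟨hseg, w, hw, hw₁, hw₂⟩
  obtain ⟨w', hw', hw'₁, hw'₂⟩ := h w hw
  exact ⟨hseg, w', hw', hw'₁.trans hw₁, hw₂.trans hw'₂⟩

end MVPaper

open MVPaper in
theorem prop_Duability_pairing_general
    {k A B : Type} [Field k] [Ring A] [Bialgebra k A] [Ring B] [Bialgebra k B]
    {Γ : AddSubmonoid (ℝ × ℝ)} [DecidableEq Γ]
    (𝒜 : Γ → Submodule k A) [DirectSum.Decomposition 𝒜] [SetLike.GradedMonoid 𝒜]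
    (ℬ : Γ → Submodule k B) [DirectSum.Decomposition ℬ] [SetLike.GradedMonoid ℬ]
    (hHP : HalfPlane Γ)
    (hgrA : ComulGraded 𝒜) (hdecA : ComulDecomposes 𝒜)
    (hgrB : ComulGraded ℬ) (hdecB : ComulDecomposes ℬ)
    (π : A →ₗ[k] Module.Dual k B)
    (hπ : IsGradedBialgebraPairing 𝒜 ℬ π)
    (a : A) (γa : Γ) (ha : a ∈ 𝒜 γa) (hom_a : IsOrderedMonomial 𝒜 a)
    (b : B) (γb : Γ) (hb : b ∈ ℬ γb) (hom_b : IsOrderedMonomial ℬ b)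
    (hne : PolWedge 𝒜 a γa ≠ PolWedge ℬ b γb) :
    π a b = 0 := by
  by_contra hab
  obtain rfl : γa = γb := by_contra fun h => hab (hπ.1 γa γb h a ha b hb)
  have hAB := liesBelow_Pol_of_pairing_ne_zero hHP hgrA hdecA hdecB hπ hom_a hab
  have hBA := liesBelow_Pol_of_pairing_ne_zero hHP hgrB hdecB hdecA hπ.flip hom_b hab
  exact hne ((PolWedge_subset_of_liesBelow hAB γa).antisymm (PolWedge_subset_of_liesBelow hBA γa))

open MVPaper in
/-- Let `A` be a connected `Γ`-graded bialgebra with finite-dimensional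
homogeneous components and `B` its graded dual, with duality pairing `π`.  If `a` and `b`
are ordered monomials in `A` and `B` (of degrees `γa`, `γb`) then `⟨a, b⟩ = 0` unless
`Pol^∧(a) = Pol^∧(b)`. -/
theorem prop_Duability_pairing
    {k A B : Type} [Field k] [Ring A] [Bialgebra k A] [Ring B] [Bialgebra k B]
    {Γ : AddSubmonoid (ℝ × ℝ)} [DecidableEq Γ]
    (𝒜 : Γ → Submodule k A) [DirectSum.Decomposition 𝒜] [SetLike.GradedMonoid 𝒜]
    (ℬ : Γ → Submodule k B) [DirectSum.Decomposition ℬ] [SetLike.GradedMonoid ℬ]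
    (hHP : HalfPlane Γ) (hdisc : DiscreteTopology Γ)
    (hconnA : GradedConnected 𝒜) (hgrA : ComulGraded 𝒜) (hdecA : ComulDecomposes 𝒜)
    (hconnB : GradedConnected ℬ) (hgrB : ComulGraded ℬ) (hdecB : ComulDecomposes ℬ)
    (hfinA : ∀ γ : Γ, FiniteDimensional k (𝒜 γ))
    (hfinB : ∀ γ : Γ, FiniteDimensional k (ℬ γ))
    (π : A →ₗ[k] Module.Dual k B)
    (hπ : IsGradedBialgebraPairing 𝒜 ℬ π)
    (a : A) (γa : Γ) (ha : a ∈ 𝒜 γa) (hom_a : IsOrderedMonomial 𝒜 a)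
    (b : B) (γb : Γ) (hb : b ∈ ℬ γb) (hom_b : IsOrderedMonomial ℬ b)
    (hne : PolWedge 𝒜 a γa ≠ PolWedge ℬ b γb) :
    π a b = 0 :=
  prop_Duability_pairing_general 𝒜 ℬ hHP hgrA hdecA hgrB hdecB π hπ a γa ha hom_a b γb hb hom_b hne
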